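/- arXiv:2509.15691 — 5 statements merged into one kernel-verified Lean document; each statement's English description precedes it below -/
import Mathlib

section
/- Let n be a natural number, c a real number, s a nonzero real number, and w_0, …, w_n real numbers. Define a^s_n(x) = Σ_{i=0}^{n} (s^i w_i c^i / i!) x^i and b^s_n(x) = Σ_{j=0}^{n} (s^j (1-c)^j / j!) x^j in ℝ[x]. Then for every k with 0 ≤ k ≤ n, Σ_{i=0}^{k} B^k_i(c) w_i = s^{-k} · k! · (coefficient of x^k in a^s_n(x)·b^s_n(x)). -/
/-- The `i`-th Bernstein basis polynomial of degree `n`: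
`B^n_i(t) = C(n,i) * t^i * (1-t)^(n-i)`. -/
noncomputable def bern (n i : ℕ) (t : ℝ) : ℝ :=
  (n.choose i : ℝ) * t ^ i * (1 - t) ^ (n - i)

/-!
The coefficient of `x^k` in `a * b` is the Cauchy product
`∑ (s^i w_i c^i / i!) (s^(k-i) (1-c)^(k-i) / (k-i)!)`; since `k! / (i! (k-i)!) = C(k,i)`, multiplying
it by `k! / s^k` gives term by term `C(k,i) c^i (1-c)^(k-i) w_i = B^k_i(c) w_i`.
-/

open Polynomial Finset Nat

theorem Polynomial.coeff_sum_range_C_mul_X_pow {R : Type*} [Semiring R] (f : ℕ → R)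
    {n k : ℕ} (hk : k ≤ n) :
    (∑ i ∈ range (n + 1), C (f i) * X ^ i).coeff k = f k := by
  simp only [finsetSum_coeff, coeff_C_mul_X_pow, sum_ite_eq, mem_range,
    Nat.lt_succ_of_le hk, if_true]

theorem bern_mul_eq_scaled_binomial_term (c s : ℝ) (hs : s ≠ 0) (w : ℕ → ℝ) {k i : ℕ}
    (hik : i ≤ k) :
    bern k i c * w i = (s ^ k)⁻¹ * k ! *
      (s ^ i * w i * c ^ i / i ! * (s ^ (k - i) * (1 - c) ^ (k - i) / (k - i)!)) := by
  have hpow : s ^ k = s ^ i * s ^ (k - i) := by rw [← pow_add, Nat.add_sub_cancel' hik]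
  rw [bern, Nat.cast_choose ℝ hik, hpow]
  field_simp

theorem bezier_subdiv_coeff_eq_scaled_coeff
    (n : ℕ) (c s : ℝ) (hs : s ≠ 0) (w : ℕ → ℝ) (a b : Polynomial ℝ)
    (ha : a = ∑ i ∈ Finset.range (n + 1),
      Polynomial.C (s ^ i * w i * c ^ i / (Nat.factorial i : ℝ)) * Polynomial.X ^ i)
    (hb : b = ∑ j ∈ Finset.range (n + 1),
      Polynomial.C (s ^ j * (1 - c) ^ j / (Nat.factorial j : ℝ)) * Polynomial.X ^ j) :
    ∀ k ≤ n,
      ∑ i ∈ Finset.range (k + 1), bern k i c * w i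
        = (s ^ k)⁻¹ * (Nat.factorial k : ℝ) * (a * b).coeff k := by
  intro k hk
  rw [coeff_mul, Nat.sum_antidiagonal_eq_sum_range_succ_mk, mul_sum]
  refine sum_congr rfl fun i hi => ?_
  have hik : i ≤ k := Nat.lt_succ_iff.1 (mem_range.1 hi)
  rw [ha, hb, coeff_sum_range_C_mul_X_pow _ (hik.trans hk),
    coeff_sum_range_C_mul_X_pow _ ((k.sub_le i).trans hk)]
  exact bern_mul_eq_scaled_binomial_term c s hs w hik
end

section
/- For all natural numbers n and i with 0 ≤ i ≤ n and all real numbers c and t, the Bernstein basis polynomials satisfy the subdivision identity B^n_i(c·t) = Σ_{k=i}^{n} B^k_i(c) · B^n_k(t). -/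
/-!
Write `n = i + m`. Since `1 - c t = (1 - c) t + (1 - t)`, the binomial theorem expands
`B^{i+m}_i(c t) = C(i+m, i) (c t)^i ((1 - c) t + (1 - t))^m` into `m + 1` terms, and the
`j`-th of them is `B^{i+j}_i(c) B^{i+m}_{i+j}(t)` by the trinomial revision
`C(i+m, i+j) C(i+j, i) = C(i+m, i) C(m, j)`. For `i > n` both sides vanish.
-/

lemma bern_eq_zero_of_lt {n i : ℕ} (h : n < i) (t : ℝ) : bern n i t = 0 := by
  simp [bern, Nat.choose_eq_zero_of_lt h]

lemma choose_add_mul_choose_add (i j m : ℕ) :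
    (i + m).choose (i + j) * (i + j).choose i = (i + m).choose i * m.choose j := by
  simpa using Nat.choose_mul (n := i + m) (k := i + j) (s := i) (Nat.le_add_right i j)

lemma bern_add_mul_bern_add {i j m : ℕ} (hjm : j ≤ m) (c t : ℝ) :
    bern (i + j) i c * bern (i + m) (i + j) t =
      (i + m).choose i * (c * t) ^ i *
        (((1 - c) * t) ^ j * (1 - t) ^ (m - j) * m.choose j) := by
  have hchoose : ((i + m).choose (i + j) * (i + j).choose i : ℝ) =
      (i + m).choose i * m.choose j := by
    exact_mod_cast choose_add_mul_choose_add i j m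
  have hsub : i + m - (i + j) = m - j := by omega
  simp only [bern, Nat.add_sub_cancel_left, hsub, mul_pow, pow_add]
  linear_combination (c ^ i * (1 - c) ^ j * t ^ i * t ^ j * (1 - t) ^ (m - j)) * hchoose

theorem bernstein_subdivision_identity_general
    (n i : ℕ) (c t : ℝ) :
    bern n i (c * t) = ∑ k ∈ Finset.Icc i n, bern k i c * bern n k t := by
  rcases lt_or_ge n i with hni | hin
  · simp [bern_eq_zero_of_lt hni, Finset.Icc_eq_empty_of_lt hni]
  obtain ⟨m, rfl⟩ := Nat.exists_eq_add_of_le hin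
  have hbinom : (1 - c * t) ^ m =
      ∑ j ∈ Finset.range (m + 1), ((1 - c) * t) ^ j * (1 - t) ^ (m - j) * m.choose j := by
    rw [← add_pow]
    ring
  have hlen : i + m + 1 - i = m + 1 := by omega
  rw [← Finset.Ico_add_one_right_eq_Icc, Finset.sum_Ico_eq_sum_range, hlen, bern, Nat.add_sub_cancel_left, hbinom, Finset.mul_sum]
  refine Finset.sum_congr rfl fun j hj => ?_
  rw [bern_add_mul_bern_add (Nat.lt_succ_iff.mp (Finset.mem_range.mp hj))]

theorem bernstein_subdivision_identity
    (n i : ℕ) (hin : i ≤ n) (c t : ℝ) :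
    bern n i (c * t) = ∑ k ∈ Finset.Icc i n, bern k i c * bern n k t :=
  bernstein_subdivision_identity_general n i c t
end

section
/- Let d and n be natural numbers with d ≥ 1, let W_0, …, W_n be points of ℝ^d, and let c be a real number. Define the Bézier curve P_n(t) := Σ_{i=0}^{n} B^n_i(t) W_i and, for 0 ≤ k ≤ n, the points U_k := Σ_{j=0}^{n-k} B^{n-k}_j(c) W_{k+j}. Then for every real number t, Σ_{k=0}^{n} B^n_k(t) U_k = P_n(c + (1-c)·t); that is, the bottom row of the de Casteljau table gives the control points of the right segment P_n([c,1]). -/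
/-!
Writing `s = c + (1 - c) t = t + (1 - t) c` gives `1 - s = (1 - t)(1 - c)`, so expanding `s ^ i` by the
binomial theorem writes `B^n_i(s)` as `∑_{k ≤ i} B^n_k(t) B^{n-k}_{i-k}(c)`, thanks to
`C(n,k) C(n-k,i-k) = C(n,i) C(i,k)`. Substituting the definition of the `U_k` and exchanging the two
sums over `k ≤ i ≤ n` turns `∑_k B^n_k(t) U_k` into `∑_i B^n_i(s) W_i = P_n(s)`.
-/

open Finset

theorem sum_range_sum_range_sub_comm {M : Type*} [AddCommMonoid M] (n : ℕ) (f : ℕ → ℕ → M) :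
    ∑ k ∈ range (n + 1), ∑ j ∈ range (n - k + 1), f k (k + j) =
      ∑ i ∈ range (n + 1), ∑ k ∈ range (i + 1), f k i := by
  calc _ = ∑ k ∈ range (n + 1), ∑ i ∈ Ico k (n + 1), f k i :=
        sum_congr rfl fun k hk => by
          rw [sum_Ico_eq_sum_range, show n + 1 - k = n - k + 1 by grind]
    _ = _ := by simpa only [range_eq_Ico] using sum_Ico_Ico_comm 0 (n + 1) f

theorem bern_mul_bern_sub_sub {n i k : ℕ} (hki : k ≤ i) (hin : i ≤ n) (t c : ℝ) :
    bern n k t * bern (n - k) (i - k) c =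
      n.choose i * (t ^ k * ((1 - t) * c) ^ (i - k) * i.choose k) * ((1 - t) * (1 - c)) ^ (n - i) := by
  have hchoose : (n.choose k : ℝ) * (n - k).choose (i - k) = n.choose i * i.choose k := by
    exact_mod_cast (Nat.choose_mul hki).symm
  have hpow : (1 - t) ^ (n - k) = (1 - t) ^ (i - k) * (1 - t) ^ (n - i) := by
    rw [← pow_add]; congr 1; omega
  rw [bern, bern, hpow, show n - k - (i - k) = n - i by omega, mul_pow, mul_pow]
  linear_combination (t ^ k * (1 - t) ^ (i - k) * c ^ (i - k) * (1 - t) ^ (n - i) * (1 - c) ^ (n - i))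
    * hchoose

theorem sum_bern_mul_bern_sub_sub {n i : ℕ} (hin : i ≤ n) (t c : ℝ) :
    ∑ k ∈ range (i + 1), bern n k t * bern (n - k) (i - k) c = bern n i (c + (1 - c) * t) := by
  rw [bern, show c + (1 - c) * t = t + (1 - t) * c by ring,
    show 1 - (t + (1 - t) * c) = (1 - t) * (1 - c) by ring, add_pow, mul_sum, sum_mul]
  exact sum_congr rfl fun k hk => bern_mul_bern_sub_sub (mem_range_succ_iff.mp hk) hin t c

theorem sum_bern_smul_sum_bern_smul {M : Type*} [AddCommMonoid M] [Module ℝ M] (n : ℕ)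
    (W : ℕ → M) (t c : ℝ) :
    ∑ k ∈ range (n + 1), bern n k t • ∑ j ∈ range (n - k + 1), bern (n - k) j c • W (k + j) =
      ∑ i ∈ range (n + 1), bern n i (c + (1 - c) * t) • W i := by
  calc _ = ∑ i ∈ range (n + 1), ∑ k ∈ range (i + 1), (bern n k t * bern (n - k) (i - k) c) • W i := by
        rw [← sum_range_sum_range_sub_comm]
        simp only [Nat.add_sub_cancel_left, smul_sum, smul_smul]
    _ = _ := sum_congr rfl fun i hi => by
        rw [← sum_smul, sum_bern_mul_bern_sub_sub (mem_range_succ_iff.mp hi)]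

theorem bezier_right_segment_general
    (d n : ℕ) (W : ℕ → (Fin d → ℝ)) (c : ℝ)
    (P : ℝ → (Fin d → ℝ))
    (hP : ∀ t : ℝ, P t = ∑ i ∈ Finset.range (n + 1), bern n i t • W i)
    (U : ℕ → (Fin d → ℝ))
    (hU : ∀ k ≤ n, U k = ∑ j ∈ Finset.range (n - k + 1), bern (n - k) j c • W (k + j)) :
    ∀ t : ℝ, ∑ k ∈ Finset.range (n + 1), bern n k t • U k = P (c + (1 - c) * t) := by
  intro t
  rw [hP, ← sum_bern_smul_sum_bern_smul]
  exact sum_congr rfl fun k hk => by rw [hU k (mem_range_succ_iff.mp hk)]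

theorem bezier_right_segment
    (d n : ℕ) (hd : 1 ≤ d) (W : ℕ → (Fin d → ℝ)) (c : ℝ)
    (P : ℝ → (Fin d → ℝ))
    (hP : ∀ t : ℝ, P t = ∑ i ∈ Finset.range (n + 1), bern n i t • W i)
    (U : ℕ → (Fin d → ℝ))
    (hU : ∀ k ≤ n, U k = ∑ j ∈ Finset.range (n - k + 1), bern (n - k) j c • W (k + j)) :
    ∀ t : ℝ, ∑ k ∈ Finset.range (n + 1), bern n k t • U k = P (c + (1 - c) * t) :=
  bezier_right_segment_general d n W c P hP U hU
end

section
/- Let n be a natural number and w_0, …, w_n real numbers, and let p(t) := Σ_{i=0}^{n} B^n_i(t) w_i be the corresponding polynomial of degree at most n. Then for every k with 0 ≤ k ≤ n, the k-th derivative of p at 0 equals (n!/(n-k)!) · Σ_{i=0}^{k} C(k,i) (-1)^{k-i} w_i. -/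
/-!
Expanding `(1 - t)^(n-i)` binomially, the coefficient of `t^k` in `B^n_i` is
`(-1)^(k-i) C(n,i) C(n-i,k-i) = (-1)^(k-i) C(n,k) C(k,i)`, so the coefficient of `t^k` in `p` is
`C(n,k) Σ_{i ≤ k} C(k,i) (-1)^(k-i) w_i`, and the `k`-th derivative at `0` is `k!` times it.
-/

open Polynomial
open scoped Nat

namespace Polynomial

section Deriv

variable {𝕜 : Type*} [NontriviallyNormedField 𝕜]

theorem iteratedDeriv_eval (P : 𝕜[X]) (k : ℕ) :
    iteratedDeriv k (fun x => P.eval x) = fun x => (derivative^[k] P).eval x := by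
  induction k with
  | zero => simp
  | succ k ih =>
    funext x
    rw [iteratedDeriv_succ, ih, Function.iterate_succ_apply']
    exact Polynomial.deriv _

theorem iteratedDeriv_eval_zero (P : 𝕜[X]) (k : ℕ) :
    iteratedDeriv k (fun x => P.eval x) 0 = k ! * P.coeff k := by
  rw [iteratedDeriv_eval]
  beta_reduce
  rw [← coeff_zero_eq_eval_zero, coeff_iterate_derivative, zero_add,
    Nat.descFactorial_self, nsmul_eq_mul]

end Deriv

theorem coeff_one_sub_X_pow {R : Type*} [CommRing R] (m j : ℕ) :
    ((1 - X : R[X]) ^ m).coeff j = (-1) ^ j * m.choose j := by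
  have h : (1 - X : R[X]) = C (-1) * (X + C (-1)) := by simp only [C_neg, C_1]; ring
  rw [h, mul_pow, ← C_pow, coeff_C_mul, coeff_X_add_C_pow, ← mul_assoc, ← pow_add]
  rcases le_or_gt j m with hjm | hmj
  · obtain ⟨d, rfl⟩ := Nat.exists_eq_add_of_le hjm
    rw [Nat.add_sub_cancel_left, show j + d + d = j + 2 * d by ring, pow_add, pow_mul]
    simp
  · simp [Nat.choose_eq_zero_of_lt hmj]

end Polynomial

theorem bernsteinPolynomial_coeff {R : Type*} [CommRing R] (n i k : ℕ) :
    (bernsteinPolynomial R n i).coeff k = (-1) ^ (k - i) * n.choose k * k.choose i := by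
  rw [bernsteinPolynomial, mul_assoc, ← C_eq_natCast, coeff_C_mul]
  rcases le_or_gt i k with hik | hki
  · obtain ⟨d, rfl⟩ := Nat.exists_eq_add_of_le hik
    have hchoose := Nat.choose_mul (n := n) (Nat.le_add_left i d)
    rw [add_comm i d, coeff_X_pow_mul, coeff_one_sub_X_pow, Nat.add_sub_cancel, mul_assoc,
      ← Nat.cast_mul, hchoose, Nat.add_sub_cancel, Nat.cast_mul]
    ring
  · simp [coeff_X_pow_mul', Nat.choose_eq_zero_of_lt hki, not_le.mpr hki]

theorem coeff_sum_C_mul_bernsteinPolynomial {R : Type*} [CommRing R] (w : ℕ → R) {n k : ℕ}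
    (hk : k ≤ n) :
    (∑ i ∈ Finset.range (n + 1), C (w i) * bernsteinPolynomial R n i).coeff k
      = n.choose k * ∑ i ∈ Finset.range (k + 1), (k.choose i : R) * (-1) ^ (k - i) * w i := by
  have hvanish : ∀ i ∈ Finset.range (n + 1), i ∉ Finset.range (k + 1) →
      (k.choose i : R) * (-1) ^ (k - i) * w i = 0 := fun i _ hi => by
    rw [Nat.choose_eq_zero_of_lt (by simpa using hi), Nat.cast_zero, zero_mul, zero_mul]
  rw [finsetSum_coeff,
    Finset.sum_subset (Finset.range_subset_range.mpr (by omega : k + 1 ≤ n + 1)) hvanish,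
    Finset.mul_sum]
  refine Finset.sum_congr rfl fun i _ => ?_
  rw [coeff_C_mul, bernsteinPolynomial_coeff]
  ring

theorem bern_eq_eval (n i : ℕ) (t : ℝ) : bern n i t = (bernsteinPolynomial ℝ n i).eval t := by
  simp [bern, bernsteinPolynomial]

theorem bezier_iteratedDeriv_at_zero
    (n : ℕ) (w : ℕ → ℝ) (p : ℝ → ℝ)
    (hp : ∀ t : ℝ, p t = ∑ i ∈ Finset.range (n + 1), bern n i t * w i) :
    ∀ k ≤ n,
      iteratedDeriv k p 0
        = ((Nat.factorial n : ℝ) / (Nat.factorial (n - k) : ℝ))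
          * ∑ i ∈ Finset.range (k + 1), (k.choose i : ℝ) * (-1) ^ (k - i) * w i := by
  intro k hk
  set P : ℝ[X] := ∑ i ∈ Finset.range (n + 1), C (w i) * bernsteinPolynomial ℝ n i
  have hpP : p = fun t => P.eval t := by
    funext t
    simp only [hp, P, eval_finsetSum, eval_mul, eval_C, bern_eq_eval, mul_comm]
  have hfactorial : (k ! * n.choose k : ℝ) = n ! / (n - k)! := by
    rw [eq_div_iff (by positivity), ← Nat.cast_mul, ← Nat.descFactorial_eq_factorial_mul_choose,
      ← Nat.cast_mul, mul_comm, Nat.factorial_mul_descFactorial hk]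
  rw [hpP, iteratedDeriv_eval_zero, coeff_sum_C_mul_bernsteinPolynomial w hk, ← mul_assoc,
    hfactorial]
end

section
/- Let n be a natural number, c a real number, and ω_0, …, ω_n real numbers. Define ν_k := Σ_{i=0}^{k} ω_i B^k_i(c) for 0 ≤ k ≤ n. Then for every real number t, Σ_{k=0}^{n} B^n_k(t) ν_k = Σ_{i=0}^{n} ω_i B^n_i(c·t); that is, the subdivided weights ν_k reproduce the weight function of the rational Bézier curve on the left segment. -/
open Finset

lemma bern_add_mul_bern (n i j : ℕ) (t c : ℝ) :
    bern n (i + j) t * bern (i + j) i c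
      = (n.choose i * (c * t) ^ i) *
          ((t * (1 - c)) ^ j * (1 - t) ^ (n - i - j) * ((n - i).choose j : ℝ)) := by
  have hchoose : (n.choose (i + j) : ℝ) * (i + j).choose i = n.choose i * (n - i).choose j := by
    have h := Nat.choose_mul (n := n) (Nat.le_add_right i j)
    rw [Nat.add_sub_cancel_left] at h
    exact_mod_cast h
  rw [bern, bern, Nat.add_sub_cancel_left, Nat.sub_add_eq, mul_pow, mul_pow]
  linear_combination (t ^ i * t ^ j * c ^ i * (1 - t) ^ (n - i - j) * (1 - c) ^ j) * hchoose

lemma sum_bern_add_mul_bern (n i : ℕ) (t c : ℝ) :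
    ∑ j ∈ range (n - i + 1), bern n (i + j) t * bern (i + j) i c = bern n i (c * t) := by
  simp_rw [bern_add_mul_bern, ← mul_sum, ← add_pow, bern]
  ring

theorem rational_bezier_subdivided_weights
    (n : ℕ) (c : ℝ) (ω : ℕ → ℝ)
    (ν : ℕ → ℝ)
    (hν : ∀ k ≤ n, ν k = ∑ i ∈ Finset.range (k + 1), ω i * bern k i c) :
    ∀ t : ℝ,
      ∑ k ∈ Finset.range (n + 1), bern n k t * ν k
        = ∑ i ∈ Finset.range (n + 1), ω i * bern n i (c * t) := by
  intro t
  calc ∑ k ∈ range (n + 1), bern n k t * ν k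
      = ∑ k ∈ range (n + 1), ∑ i ∈ range (k + 1), ω i * (bern n k t * bern k i c) := by
        refine sum_congr rfl fun k hk => ?_
        rw [hν k (Nat.lt_succ_iff.mp (mem_range.mp hk)), mul_sum]
        exact sum_congr rfl fun i _ => by ring
    _ = ∑ i ∈ range (n + 1), ∑ k ∈ Ico i (n + 1), ω i * (bern n k t * bern k i c) :=
        sum_comm' fun k i => by simp only [mem_range, mem_Ico]; omega
    _ = ∑ i ∈ range (n + 1), ω i * bern n i (c * t) := by
        refine sum_congr rfl fun i hi => ?_
        rw [← mul_sum, sum_Ico_eq_sum_range, Nat.sub_add_comm (mem_range_succ_iff.mp hi),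
          sum_bern_add_mul_bern]
end
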